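/- arXiv:1608.03248 — 2 statements merged into one kernel-verified Lean document; each statement's English description precedes it below -/
import Mathlib

section
/- Define ζ(μ̄) = (μ̄·T·σᵥ² + tr(Q)/μ̄)/(2 − μ̄·T) for μ̄ ∈ (0, 2/T), where T = tr(R) > 0, σᵥ² > 0, tr(Q) > 0. Then ζ is minimized at the unique μᵒ ∈ (0, 2/T) satisfying T·σᵥ²·(μᵒ)² + T·tr(Q)·μᵒ − tr(Q) = 0, namely μᵒ = (−T·tr(Q) + √(T²tr(Q)² + 4σᵥ²·T·tr(Q)))/(2T·σᵥ²), and this μᵒ indeed lies in (0, 2/T). -/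
/-!
With `a = T σᵥ²`, `b = T tr(Q)`, `c = tr(Q)`, the point `μᵒ` is the positive root of
`a μ² + b μ - c`, the numerator of `ζ'`. Using that equation, clearing denominators gives
`ζ(μ) - ζ(μᵒ) = (μ - μᵒ)² (2 a μᵒ + b) / (μ μᵒ (2 - μT) (2 - μᵒT))`, which is nonnegative on the
stability interval, so `μᵒ` is a global minimiser there. The root lies in that interval because
`c = a μᵒ² + b μᵒ > b μᵒ` forces `μᵒ < c / b = 1 / T`.
-/

open Set

namespace Quadratic

noncomputable def posRoot (a b c : ℝ) : ℝ := (-b + Real.sqrt (b ^ 2 + 4 * a * c)) / (2 * a)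

theorem posRoot_isRoot {a b c : ℝ} (ha : a ≠ 0) (hd : 0 ≤ b ^ 2 + 4 * a * c) :
    a * posRoot a b c ^ 2 + b * posRoot a b c - c = 0 := by
  have hsq := Real.sq_sqrt hd
  have h2a : 2 * a * posRoot a b c + b = Real.sqrt (b ^ 2 + 4 * a * c) := by
    rw [posRoot]; field_simp; ring
  have h4a : (4 * a) * (a * posRoot a b c ^ 2 + b * posRoot a b c - c) = 0 := by
    linear_combination (2 * a * posRoot a b c + b + Real.sqrt (b ^ 2 + 4 * a * c)) * h2a + hsq
  exact (mul_eq_zero.mp h4a).resolve_left (by positivity)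

theorem posRoot_pos {a b c : ℝ} (ha : 0 < a) (hc : 0 < c) : 0 < posRoot a b c := by
  have hb : b < Real.sqrt (b ^ 2 + 4 * a * c) :=
    calc b ≤ |b| := le_abs_self b
      _ = Real.sqrt (b ^ 2) := (Real.sqrt_sq_eq_abs b).symm
      _ < Real.sqrt (b ^ 2 + 4 * a * c) := Real.sqrt_lt_sqrt (sq_nonneg b) (by linarith [mul_pos ha hc])
  exact div_pos (by linarith) (by positivity)

theorem eq_posRoot_of_isRoot {a b c x : ℝ} (ha : 0 < a) (hb : 0 ≤ b) (hx : 0 < x)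
    (h : a * x ^ 2 + b * x - c = 0) : x = posRoot a b c := by
  have hsq : (2 * a * x + b) ^ 2 = b ^ 2 + 4 * a * c := by linear_combination (4 * a) * h
  have hsqrt : Real.sqrt (b ^ 2 + 4 * a * c) = 2 * a * x + b := by
    rw [← hsq]; exact Real.sqrt_sq (by positivity)
  rw [posRoot, hsqrt]; field_simp; ring

theorem lt_div_of_isRoot {a b c x : ℝ} (ha : 0 < a) (hb : 0 < b) (hx : 0 < x)
    (h : a * x ^ 2 + b * x - c = 0) : x < c / b := by
  rw [lt_div_iff₀ hb]; nlinarith [mul_pos ha (pow_pos hx 2)]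

end Quadratic

section EMSE

variable {T σv2 trQ : ℝ}

noncomputable def emse (T σv2 trQ μ : ℝ) : ℝ := (μ * T * σv2 + trQ / μ) / (2 - μ * T)

theorem two_sub_mul_pos_of_mem_Ioo {μ : ℝ} (hT : 0 < T) (hμ : μ ∈ Ioo 0 (2 / T)) :
    0 < 2 - μ * T := by
  linarith [(lt_div_iff₀ hT).mp hμ.2]

theorem emse_sub_emse_of_isRoot {μ ν : ℝ} (hμ : μ ≠ 0) (hν : ν ≠ 0) (hμT : 2 - μ * T ≠ 0)
    (hνT : 2 - ν * T ≠ 0) (hroot : T * σv2 * ν ^ 2 + T * trQ * ν - trQ = 0) :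
    emse T σv2 trQ μ - emse T σv2 trQ ν =
      (μ - ν) ^ 2 * (2 * T * σv2 * ν + T * trQ) / (μ * ν * (2 - μ * T) * (2 - ν * T)) := by
  rw [emse, emse, div_sub_div _ _ hμT hνT, div_eq_div_iff (mul_ne_zero hμT hνT) (by simp [*])]
  field_simp
  linear_combination 2 * (2 - T * ν) * (μ - ν) * hroot

theorem emse_le_emse_of_isRoot {μ ν : ℝ} (hT : 0 < T) (hσ : 0 ≤ σv2) (hq : 0 ≤ trQ)
    (hμ : μ ∈ Ioo 0 (2 / T)) (hν : ν ∈ Ioo 0 (2 / T))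
    (hroot : T * σv2 * ν ^ 2 + T * trQ * ν - trQ = 0) :
    emse T σv2 trQ ν ≤ emse T σv2 trQ μ := by
  have hμT := two_sub_mul_pos_of_mem_Ioo hT hμ
  have hνT := two_sub_mul_pos_of_mem_Ioo hT hν
  have hμ0 := hμ.1
  have hν0 := hν.1
  rw [← sub_nonneg, emse_sub_emse_of_isRoot hμ0.ne' hν0.ne' hμT.ne' hνT.ne' hroot]
  positivity

end EMSE

theorem stmt_11 (T σv2 trQ : ℝ) (hT : T > 0) (hv : σv2 > 0) (hQ : trQ > 0)
    (ζ : ℝ → ℝ)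
    (hζ : ∀ μ ∈ Ioo 0 (2 / T), ζ μ = (μ * T * σv2 + trQ / μ) / (2 - μ * T))
    (μo : ℝ)
    (hμo : μo = (-(T * trQ) + Real.sqrt (T^2 * trQ^2 + 4 * σv2 * T * trQ))
      / (2 * T * σv2)) :
    μo ∈ Ioo 0 (2 / T) ∧
    T * σv2 * μo^2 + T * trQ * μo - trQ = 0 ∧
    (∀ μ ∈ Ioo 0 (2 / T), T * σv2 * μ^2 + T * trQ * μ - trQ = 0 → μ = μo) ∧
    (∀ μ ∈ Ioo 0 (2 / T), ζ μo ≤ ζ μ) := by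
  have hμo' : μo = Quadratic.posRoot (T * σv2) (T * trQ) trQ := by
    rw [hμo, Quadratic.posRoot]; ring_nf
  have ha : 0 < T * σv2 := mul_pos hT hv
  have hb : 0 < T * trQ := mul_pos hT hQ
  have hroot : T * σv2 * μo ^ 2 + T * trQ * μo - trQ = 0 := by
    rw [hμo']; exact Quadratic.posRoot_isRoot ha.ne' (by positivity)
  have hpos : 0 < μo := hμo' ▸ Quadratic.posRoot_pos ha hQ
  have hlt : μo < 2 / T :=
    calc μo < trQ / (T * trQ) := Quadratic.lt_div_of_isRoot ha hb hpos hroot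
      _ = 1 / T := by field_simp
      _ < 2 / T := by gcongr; norm_num
  have hmem : μo ∈ Ioo 0 (2 / T) := ⟨hpos, hlt⟩
  refine ⟨hmem, hroot, fun μ hμ h ↦ ?_, fun μ hμ ↦ ?_⟩
  · rw [hμo']; exact Quadratic.eq_posRoot_of_isRoot ha hb.le hμ.1 h
  · rw [hζ μ hμ, hζ μo hmem]
    exact emse_le_emse_of_isRoot hT hv.le hQ.le hμ hmem hroot
end

section
/- The root of T·σᵥ²·(μ₁−μ₂)²·η² + T·(tr(Q) + 2μ₂σᵥ²)·(μ₁−μ₂)·η + T·σᵥ²·μ₂² + T·tr(Q)·μ₂ − tr(Q) = 0 for which the net step size ημ₁ + (1−η)μ₂ is nonnegative is ηᵒ = (c − T(tr(Q) + 2μ₂σᵥ²))/(2(μ₁−μ₂)Tσᵥ²), where c = √(T²tr(Q)² + 4σᵥ²T·tr(Q)) ≥ 0, assuming μ₁ > μ₂ > 0, T > 0, σᵥ² > 0, tr(Q) > 0, and T·tr(Q)·μ₂ + Tσᵥ²μ₂² < tr(Q). -/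
theorem stmt_13 (T σv2 trQ μ₁ μ₂ : ℝ)
    (hT : T > 0) (hv : σv2 > 0) (hQ : trQ > 0) (hμ : μ₁ > μ₂) (hμ2 : μ₂ > 0)
    (hsmall : T * trQ * μ₂ + T * σv2 * μ₂^2 < trQ)
    (c ηo : ℝ) (hc : c = Real.sqrt (T^2 * trQ^2 + 4 * σv2 * T * trQ))
    (hηo : ηo = (c - T * (trQ + 2 * μ₂ * σv2)) / (2 * (μ₁ - μ₂) * T * σv2)) :
    (T * σv2 * (μ₁ - μ₂)^2 * ηo^2
        + T * (trQ + 2 * μ₂ * σv2) * (μ₁ - μ₂) * ηo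
        + T * σv2 * μ₂^2 + T * trQ * μ₂ - trQ = 0)
    ∧ ηo * μ₁ + (1 - ηo) * μ₂ ≥ 0
    ∧ (∀ η : ℝ,
        T * σv2 * (μ₁ - μ₂)^2 * η^2
          + T * (trQ + 2 * μ₂ * σv2) * (μ₁ - μ₂) * η
          + T * σv2 * μ₂^2 + T * trQ * μ₂ - trQ = 0 →
        η * μ₁ + (1 - η) * μ₂ ≥ 0 → η = ηo) := by
  have hd : μ₁ - μ₂ > 0 := by linarith
  have harg : (0:ℝ) ≤ T^2 * trQ^2 + 4 * σv2 * T * trQ := by positivity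
  have hc0 : c ≥ 0 := by rw [hc]; exact Real.sqrt_nonneg _
  have hc2 : c^2 = T^2 * trQ^2 + 4 * σv2 * T * trQ := by
    rw [hc, Real.sq_sqrt harg]
  have hgap : (0:ℝ) < trQ - (T * trQ * μ₂ + T * σv2 * μ₂^2) := by linarith
  have hK : T * (trQ + 2 * μ₂ * σv2) < c := by
    apply lt_of_pow_lt_pow_left₀ 2 hc0
    rw [hc2]
    nlinarith [mul_pos (mul_pos hT hv) hgap]
  have hden : (2 * (μ₁ - μ₂) * T * σv2) ≠ 0 := by positivity
  have hηov : ηo * (2 * (μ₁ - μ₂) * T * σv2) = c - T * (trQ + 2 * μ₂ * σv2) := by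
    rw [hηo]; field_simp
  have h1' : 4 * T * σv2 * (T * σv2 * (μ₁ - μ₂)^2 * ηo^2
        + T * (trQ + 2 * μ₂ * σv2) * (μ₁ - μ₂) * ηo
        + T * σv2 * μ₂^2 + T * trQ * μ₂ - trQ) = 0 := by
    linear_combination (ηo * (2 * (μ₁ - μ₂) * T * σv2) + c
      + T * (trQ + 2 * μ₂ * σv2)) * hηov + hc2
  have h1 : T * σv2 * (μ₁ - μ₂)^2 * ηo^2
        + T * (trQ + 2 * μ₂ * σv2) * (μ₁ - μ₂) * ηo
        + T * σv2 * μ₂^2 + T * trQ * μ₂ - trQ = 0 :=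
    (mul_eq_zero.mp h1').resolve_left (by positivity)
  have hηo0 : ηo > 0 := by
    rw [hηo]
    apply div_pos (by linarith) (by positivity)
  refine ⟨h1, by nlinarith [mul_pos hηo0 hd], ?_⟩
  intro η hroot hpos
  by_contra hne
  have hfac : (η - ηo) * (T * σv2 * (μ₁ - μ₂)^2 * (η + ηo)
      + T * (trQ + 2 * μ₂ * σv2) * (μ₁ - μ₂)) = 0 := by
    linear_combination hroot - h1
  have hsum : T * σv2 * (μ₁ - μ₂)^2 * (η + ηo)
      + T * (trQ + 2 * μ₂ * σv2) * (μ₁ - μ₂) = 0 := by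
    rcases mul_eq_zero.mp hfac with h | h
    · exact absurd (by linarith) hne
    · exact h
  have h3 : T * σv2 * (μ₁ - μ₂) * (η + ηo) + T * (trQ + 2 * μ₂ * σv2) = 0 := by
    apply mul_left_cancel₀ (ne_of_gt hd)
    linear_combination hsum
  have h5 : 2 * (T * σv2 * (μ₁ - μ₂) * η) = -(T * (trQ + 2 * μ₂ * σv2)) - c := by
    linear_combination 2 * h3 - hηov
  have h4 : T * σv2 * (μ₂ + η * (μ₁ - μ₂)) ≥ 0 :=
    mul_nonneg (mul_pos hT hv).le (by linarith)
  nlinarith [h4, h5, hc0, mul_pos hT hQ]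
end
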